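/- arXiv:0807.3864 — 2 statements merged into one kernel-verified Lean document; each statement's English description precedes it below -/
import Mathlib

section
/- Fix r > 0, V > 0, x ∈ ℝ, y+h > 0 with r² = x² + (y+h)². For t > t₀ = r/V, the function γ(t) = −i x t/r² + ((y+h)/r)·√(t²/r² − 1/V²) satisfies (y+h)·(1/V² + γ(t)²)^{1/2} + i γ(t) x = t, where (·)^{1/2} is the principal square root. -/
/-- Along the explicit Cagniard–de Hoop contour
`γ(t) = -i x t/r² + ((y+h)/r) √(t²/r² - 1/V²)`, one has
`(y+h) (1/V² + γ(t)²)^{1/2} + i γ(t) x = t` for `t > t₀ = r/V`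
(principal square root). -/
theorem cagniard_contour_identity (x y h r V t : ℝ) (hr : 0 < r) (hV : 0 < V)
    (hyh : 0 < y + h) (hr2 : r ^ 2 = x ^ 2 + (y + h) ^ 2) (ht : r / V < t) :
    ((y : ℂ) + h) *
        (1 / (V : ℂ) ^ 2 +
          (-Complex.I * x * t / r ^ 2 +
            (((y + h) / r : ℝ) : ℂ) * (Real.sqrt (t ^ 2 / r ^ 2 - 1 / V ^ 2) : ℂ)) ^ 2) ^
          ((1 : ℂ) / 2) +
      Complex.I *
        (-Complex.I * x * t / r ^ 2 +
          (((y + h) / r : ℝ) : ℂ) * (Real.sqrt (t ^ 2 / r ^ 2 - 1 / V ^ 2) : ℂ)) * (x : ℂ) =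
      (t : ℂ) := by
  have ht0 : 0 < t := lt_trans (div_pos hr hV) ht
  have hrv : r ≤ t * V := (div_le_iff₀ hV).mp ht.le
  set s : ℝ := Real.sqrt (t ^ 2 / r ^ 2 - 1 / V ^ 2) with hs
  have harg : 0 ≤ t ^ 2 / r ^ 2 - 1 / V ^ 2 := by
    rw [sub_nonneg, div_le_div_iff₀ (by positivity) (by positivity)]
    nlinarith [hr.le, mul_nonneg ht0.le hV.le]
  have hs2 : s ^ 2 = t ^ 2 / r ^ 2 - 1 / V ^ 2 := Real.sq_sqrt harg
  have hsC : (s : ℂ) ^ 2 = (t : ℂ) ^ 2 / (r : ℂ) ^ 2 - 1 / (V : ℂ) ^ 2 := by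
    exact_mod_cast hs2
  have hrC : (r : ℂ) ≠ 0 := by exact_mod_cast hr.ne'
  have hVC : (V : ℂ) ≠ 0 := by exact_mod_cast hV.ne'
  have hs2c : (s : ℂ) ^ 2 * (r : ℂ) ^ 2 * (V : ℂ) ^ 2 =
      (t : ℂ) ^ 2 * (V : ℂ) ^ 2 - (r : ℂ) ^ 2 := by
    rw [hsC]; field_simp
  have hr2C : (r : ℂ) ^ 2 = (x : ℂ) ^ 2 + ((y : ℂ) + h) ^ 2 := by exact_mod_cast hr2
  set w : ℂ := (((y + h) * t / r ^ 2 : ℝ) : ℂ) - Complex.I * ((x * s / r : ℝ) : ℂ) with hw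
  have hsq : 1 / (V : ℂ) ^ 2 +
      (-Complex.I * x * t / r ^ 2 +
        (((y + h) / r : ℝ) : ℂ) * (s : ℂ)) ^ 2 = w ^ 2 := by
    have hcan : (r : ℂ) ^ 4 * (V : ℂ) ^ 2 ≠ 0 := by
      exact mul_ne_zero (pow_ne_zero 4 hrC) (pow_ne_zero 2 hVC)
    apply mul_left_cancel₀ hcan
    rw [hw]
    push_cast
    field_simp
    linear_combination
      ((V : ℂ) ^ 2 * ((t : ℂ) ^ 2 - (r : ℂ) ^ 2 * (s : ℂ) ^ 2)) * hr2C +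
        (r : ℂ) ^ 2 * hs2c +
        ((V : ℂ) ^ 2 * (x : ℂ) ^ 2 * (t : ℂ) ^ 2 -
          (r : ℂ) ^ 2 * (V : ℂ) ^ 2 * (x : ℂ) ^ 2 * (s : ℂ) ^ 2) * Complex.I_sq
  have hre : 0 < w.re := by
    have : w.re = (y + h) * t / r ^ 2 := by
      simp only [hw, Complex.sub_re, Complex.mul_re, Complex.I_re, Complex.I_im,
        Complex.ofReal_re, Complex.ofReal_im]
      ring
    rw [this]; positivity
  have hpow : (w ^ 2) ^ ((1 : ℂ) / 2) = w := by
    simpa [one_div] using Complex.sq_cpow_two_inv hre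
  rw [hsq, hpow, hw]
  push_cast
  field_simp
  linear_combination (-(t : ℂ)) * hr2C + (-(t : ℂ) * (x : ℂ) ^ 2) * Complex.I_sq
end

section
/- With r = √(x² + (y+h)²), V > 0, t₀ = r/V, and x ≥ 0, define for t ∈ (t_h, t₀] the function v(t) = i( ((y+h)/r)√(1/V² − t²/r²) − x t/r² ). Then v(t) is purely imaginary and satisfies (y+h)(1/V² + v(t)²)^{1/2} + i v(t) x = t, where for negative real arguments q the square root is taken as (q)^{1/2} = i√(−q). -/
lemma sq_cpow_half (u : ℝ) (hu : 0 ≤ u) :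
    (((u : ℂ)) ^ 2) ^ ((1 : ℂ) / 2) = (u : ℂ) := by
  have h1 : ((u : ℂ)) ^ 2 = (((u ^ 2 : ℝ)) : ℂ) := by push_cast; ring
  have h2 : ((1 : ℂ) / 2) = (((1 / 2 : ℝ)) : ℂ) := by push_cast; ring
  rw [h1, h2, ← Complex.ofReal_cpow (sq_nonneg u)]
  norm_cast
  rw [← Real.sqrt_eq_rpow, Real.sqrt_sq hu]

/-- On the pre-arrival part of the Cagniard–de Hoop contour (`t_h < t ≤ t₀`,
`x ≥ 0`), the function
`v(t) = i( ((y+h)/r) √(1/V² - t²/r²) - x t/r² )` is purely imaginary and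
satisfies `(y+h) (1/V² + v(t)²)^{1/2} + i v(t) x = t`, where the principal
square root is used (so that `q^{1/2} = i √(-q)` for `q ∈ ℝ⁻`).
Here `t_h = (y+h)√(1/V² - 1/Vmax²) + |x|/Vmax` is the head-wave arrival time. -/
theorem cagniard_imaginary_part_identity (x y h r V Vmax t : ℝ) (hr : 0 < r) (hV : 0 < V)
    (hVmax : V ≤ Vmax) (hx : 0 ≤ x) (hyh : 0 < y + h) (hr2 : r ^ 2 = x ^ 2 + (y + h) ^ 2)
    (hth : (y + h) * Real.sqrt (1 / V ^ 2 - 1 / Vmax ^ 2) + |x| / Vmax < t)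
    (ht0 : t ≤ r / V) :
    (Complex.I * ((((y + h) / r) * Real.sqrt (1 / V ^ 2 - t ^ 2 / r ^ 2)
        - x * t / r ^ 2 : ℝ) : ℂ)).re = 0 ∧
    ((y : ℂ) + h) *
        (1 / (V : ℂ) ^ 2 +
          (Complex.I * ((((y + h) / r) * Real.sqrt (1 / V ^ 2 - t ^ 2 / r ^ 2)
            - x * t / r ^ 2 : ℝ) : ℂ)) ^ 2) ^ ((1 : ℂ) / 2) +
      Complex.I *
        (Complex.I * ((((y + h) / r) * Real.sqrt (1 / V ^ 2 - t ^ 2 / r ^ 2)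
          - x * t / r ^ 2 : ℝ) : ℂ)) * (x : ℂ) = (t : ℂ) := by
  have hVmax0 : 0 < Vmax := lt_of_lt_of_le hV hVmax
  have ht_pos : 0 < t := by
    refine lt_of_le_of_lt ?_ hth
    have h1 : 0 ≤ (y + h) * Real.sqrt (1 / V ^ 2 - 1 / Vmax ^ 2) :=
      mul_nonneg hyh.le (Real.sqrt_nonneg _)
    have h2 : 0 ≤ |x| / Vmax := div_nonneg (abs_nonneg x) hVmax0.le
    linarith
  -- nonnegativity of the radicand
  have hrad : 0 ≤ 1 / V ^ 2 - t ^ 2 / r ^ 2 := by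
    have h1 : t ^ 2 ≤ (r / V) ^ 2 := by
      apply sq_le_sq' <;> nlinarith [div_pos hr hV]
    rw [div_pow] at h1
    have h2 : t ^ 2 * V ^ 2 ≤ r ^ 2 := by
      have h3 : r ^ 2 / V ^ 2 * V ^ 2 = r ^ 2 := by field_simp
      nlinarith [sq_nonneg V]
    have h4 : t ^ 2 / r ^ 2 ≤ 1 / V ^ 2 := by
      rw [div_le_div_iff₀ (by positivity) (by positivity)]
      nlinarith
    linarith
  set s : ℝ := Real.sqrt (1 / V ^ 2 - t ^ 2 / r ^ 2) with hs_def
  have hs0 : 0 ≤ s := Real.sqrt_nonneg _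
  have hs2 : s ^ 2 = 1 / V ^ 2 - t ^ 2 / r ^ 2 := Real.sq_sqrt hrad
  constructor
  · have hre : ∀ c : ℝ, (Complex.I * (c : ℂ)).re = 0 := fun c => by simp
    exact hre _
  set w : ℝ := ((y + h) / r) * s - x * t / r ^ 2 with hw_def
  set u : ℝ := (y + h) * t / r ^ 2 + x * s / r with hu_def
  have hu0 : 0 ≤ u := by positivity
  have hrne : r ≠ 0 := hr.ne'
  have hVne : V ≠ 0 := hV.ne'
  have hab : ((y + h) / r) ^ 2 + (x / r) ^ 2 = 1 := by
    field_simp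
    linarith [hr2]
  have hs2' : s ^ 2 = 1 / V ^ 2 - (t / r) ^ 2 := by rw [hs2]; ring
  have hrr2 : r ^ 2 / r ^ 2 = 1 := div_self (by positivity)
  have keyR : 1 / V ^ 2 - w ^ 2 - u ^ 2 = 0 := by
    simp only [hw_def, hu_def]
    linear_combination (-(s ^ 2) - (t / r) ^ 2) * hab + (-1 : ℝ) * hs2'
  have keyC : (1 / (V : ℂ) ^ 2 - (w : ℂ) ^ 2 - (u : ℂ) ^ 2) = 0 := by
    exact_mod_cast congrArg (fun a : ℝ => (a : ℂ)) keyR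
  have key : 1 / (V : ℂ) ^ 2 + (Complex.I * (w : ℂ)) ^ 2 = ((u : ℂ)) ^ 2 := by
    linear_combination keyC + ((w : ℂ)) ^ 2 * Complex.I_sq
  have finR : (y + h) * u - w * x - t = 0 := by
    simp only [hw_def, hu_def]
    linear_combination (-(t / r ^ 2)) * hr2 + t * hrr2
  have finC : (((y : ℂ)) + h) * (u : ℂ) - (w : ℂ) * (x : ℂ) - (t : ℂ) = 0 := by
    exact_mod_cast congrArg (fun a : ℝ => (a : ℂ)) finR
  rw [key, sq_cpow_half u hu0]
  linear_combination finC + ((w : ℂ) * (x : ℂ)) * Complex.I_sq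
end
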